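/- Monotonic decrease of the bound: under the same definitions, δ_k = C(T̲_k) − C(T̄_k) satisfies δ_{k+1} ≤ δ_k for all 1 ≤ k < K, provided S(T̲_k) is nonempty. -/

import Mathlib

/-!
Raising a traversability map pointwise, while keeping it at most `1`, enlarges the feasible
set and lowers the cost of every path, so the optimal cost is antitone on such maps as long
as the smaller map has a feasible path (otherwise `sInf ∅ = 0` breaks monotonicity). Passing
from `k` to `k + 1` the lower map increases and the upper map decreases, and
`T̲_k ≤ T̲_{k+1} ≤ T̄_{k+1} ≤ T̄_k ≤ 1`; hence `C(T̲_{k+1}) ≤ C(T̲_k)` and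
`C(T̄_k) ≤ C(T̄_{k+1})`, the feasible path of `T̲_k` serving for both.
-/

/-- Cost of a path `τ` under traversability map `T` with auxiliary cost `f'`. -/
def pathCost {V : Type*} (f' : List V → ℝ) (T : V → ℝ) (τ : List V) : ℝ :=
  (τ.map fun v => (1 - T v) ^ 2).sum + f' τ

/-- Feasible path set: paths in `P` all of whose vertices have traversability at least `θ`. -/
def feasSet {V : Type*} (P : Finset (List V)) (θ : ℝ) (T : V → ℝ) : Set (List V) :=
  {τ | τ ∈ P ∧ ∀ v ∈ τ, θ ≤ T v}

/-- Optimal path cost over the feasible set. -/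
noncomputable def optCost {V : Type*} (P : Finset (List V)) (θ : ℝ)
    (f' : List V → ℝ) (T : V → ℝ) : ℝ :=
  sInf (pathCost f' T '' feasSet P θ T)

open Finset

theorem Finset.sum_Icc_one_add_sum_Icc_succ {M : Type*} [AddCommMonoid M] (f : ℕ → M)
    {k K : ℕ} (hk : k ≤ K) :
    ∑ j ∈ Icc 1 k, f j + ∑ j ∈ Icc (k + 1) K, f j = ∑ j ∈ Icc 1 K, f j := by
  simpa only [← Finset.Icc_add_one_left_eq_Ioc, zero_add] using
    Finset.sum_Ioc_consecutive f (Nat.zero_le k) hk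

section OptCost

variable {V : Type*} (P : Finset (List V)) (θ : ℝ) (f' : List V → ℝ) {T T' : V → ℝ}

theorem feasSet_mono (hle : ∀ v, T v ≤ T' v) : feasSet P θ T ⊆ feasSet P θ T' :=
  fun _ hτ => ⟨hτ.1, fun v hv => (hτ.2 v hv).trans (hle v)⟩

theorem pathCost_antitone (h1 : ∀ v, T' v ≤ 1) (hle : ∀ v, T v ≤ T' v) (τ : List V) :
    pathCost f' T' τ ≤ pathCost f' T τ := by
  unfold pathCost
  gcongr ?_ + _
  refine List.sum_le_sum fun v _ => ?_
  exact pow_le_pow_left₀ (sub_nonneg.2 (h1 v)) (sub_le_sub_left (hle v) 1) 2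

theorem optCost_antitone (h1 : ∀ v, T' v ≤ 1) (hle : ∀ v, T v ≤ T' v)
    (hne : (feasSet P θ T).Nonempty) :
    optCost P θ f' T' ≤ optCost P θ f' T := by
  have hbdd : BddBelow (pathCost f' T' '' feasSet P θ T') :=
    ((P.finite_toSet.subset fun _ hτ => hτ.1).image _).bddBelow
  refine le_csInf (hne.image _) ?_
  rintro _ ⟨τ, hτ, rfl⟩
  exact (csInf_le hbdd ⟨τ, feasSet_mono P θ hle hτ, rfl⟩).trans (pathCost_antitone f' h1 hle τ)

theorem optCost_sub_optCost_le_of_nested {L L' U U' : V → ℝ}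
    (hL : ∀ v, L v ≤ L' v) (hLU' : ∀ v, L' v ≤ U' v) (hU' : ∀ v, U' v ≤ U v)
    (hU : ∀ v, U v ≤ 1) (hne : (feasSet P θ L).Nonempty) :
    optCost P θ f' L' - optCost P θ f' U' ≤ optCost P θ f' L - optCost P θ f' U := by
  have hU'_le_one v : U' v ≤ 1 := (hU' v).trans (hU v)
  have hneU' : (feasSet P θ U').Nonempty :=
    hne.mono (feasSet_mono P θ fun v => (hL v).trans (hLU' v))
  exact sub_le_sub
    (optCost_antitone P θ f' (fun v => (hLU' v).trans (hU'_le_one v)) hL hne)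
    (optCost_antitone P θ f' hU hU' hneU')

end OptCost

section WeightedMaps

variable {V : Type*} (w : ℕ → ℝ) (That : ℕ → V → ℝ) (K : ℕ)

noncomputable def lowerMap (k : ℕ) (v : V) : ℝ :=
  (∑ j ∈ Icc 1 k, w j * That j v) / ∑ j ∈ Icc 1 K, w j

noncomputable def upperMap (k : ℕ) (v : V) : ℝ :=
  (∑ j ∈ Icc 1 k, w j * That j v + ∑ j ∈ Icc (k + 1) K, w j) / ∑ j ∈ Icc 1 K, w j

variable {w That K}

theorem lowerMap_le_lowerMap_succ (hw : ∀ j ∈ Icc 1 K, 0 ≤ w j)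
    (hT : ∀ j ∈ Icc 1 K, ∀ v, 0 ≤ That j v) {k : ℕ}
    (hk : k < K) (v : V) : lowerMap w That K k v ≤ lowerMap w That K (k + 1) v := by
  have hk' : k + 1 ∈ Icc 1 K := mem_Icc.2 ⟨by omega, hk⟩
  unfold lowerMap
  gcongr ?_ / _
  · exact sum_nonneg hw
  rw [sum_Icc_succ_top (by omega)]
  linarith [mul_nonneg (hw _ hk') (hT _ hk' v)]

theorem lowerMap_le_upperMap (hw : ∀ j ∈ Icc 1 K, 0 ≤ w j) (k : ℕ) (v : V) :
    lowerMap w That K k v ≤ upperMap w That K k v := by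
  unfold lowerMap upperMap
  gcongr ?_ / _
  · exact sum_nonneg hw
  refine le_add_of_nonneg_right (sum_nonneg fun j hj => hw j ?_)
  rw [mem_Icc] at hj ⊢
  omega

theorem upperMap_succ_le_upperMap (hw : ∀ j ∈ Icc 1 K, 0 ≤ w j)
    (hT : ∀ j ∈ Icc 1 K, ∀ v, That j v ≤ 1) {k : ℕ}
    (hk : k < K) (v : V) : upperMap w That K (k + 1) v ≤ upperMap w That K k v := by
  have hk' : k + 1 ∈ Icc 1 K := mem_Icc.2 ⟨by omega, hk⟩
  unfold upperMap
  gcongr ?_ / _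
  · exact sum_nonneg hw
  rw [sum_Icc_succ_top (by omega), ← insert_Icc_add_one_left_eq_Icc (show k + 1 ≤ K from hk),
    sum_insert (by simp)]
  linarith [mul_le_of_le_one_right (hw _ hk') (hT _ hk' v)]

theorem upperMap_le_one (hw : ∀ j ∈ Icc 1 K, 0 ≤ w j)
    (hT : ∀ j ∈ Icc 1 K, ∀ v, That j v ≤ 1) {k : ℕ} (hk : k ≤ K)
    (v : V) : upperMap w That K k v ≤ 1 := by
  refine div_le_one_of_le₀ ?_ (sum_nonneg hw)
  rw [← sum_Icc_one_add_sum_Icc_succ w hk]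
  gcongr with j hj
  have hj' : j ∈ Icc 1 K := mem_Icc.2 ⟨(mem_Icc.1 hj).1, (mem_Icc.1 hj).2.trans hk⟩
  exact mul_le_of_le_one_right (hw j hj') (hT j hj' v)

end WeightedMaps

theorem convergence_bound_monotone_decrease_general
    {V : Type*} (P : Finset (List V)) (θ : ℝ) (f' : List V → ℝ)
    (K : ℕ) (That : ℕ → V → ℝ) (w : ℕ → ℝ)
    (hw : ∀ j, 1 ≤ j → j ≤ K → 0 < w j)
    (hT : ∀ j, 1 ≤ j → j ≤ K → ∀ v, 0 ≤ That j v ∧ That j v ≤ 1)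
    (k : ℕ) (hkK : k < K)
    (hne : (feasSet P θ (fun v =>
      (∑ j ∈ Finset.Icc 1 k, w j * That j v) / (∑ j ∈ Finset.Icc 1 K, w j))).Nonempty) :
    optCost P θ f' (fun v =>
        (∑ j ∈ Finset.Icc 1 (k+1), w j * That j v) / (∑ j ∈ Finset.Icc 1 K, w j))
      - optCost P θ f' (fun v =>
        (∑ j ∈ Finset.Icc 1 (k+1), w j * That j v + ∑ j ∈ Finset.Icc (k+2) K, w j)
          / (∑ j ∈ Finset.Icc 1 K, w j))
    ≤ optCost P θ f' (fun v =>
        (∑ j ∈ Finset.Icc 1 k, w j * That j v) / (∑ j ∈ Finset.Icc 1 K, w j))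
      - optCost P θ f' (fun v =>
        (∑ j ∈ Finset.Icc 1 k, w j * That j v + ∑ j ∈ Finset.Icc (k+1) K, w j)
          / (∑ j ∈ Finset.Icc 1 K, w j)) := by
  have hw' : ∀ j ∈ Icc 1 K, 0 ≤ w j := fun j hj =>
    (hw j (mem_Icc.1 hj).1 (mem_Icc.1 hj).2).le
  have hT0 : ∀ j ∈ Icc 1 K, ∀ v, 0 ≤ That j v := fun j hj v =>
    (hT j (mem_Icc.1 hj).1 (mem_Icc.1 hj).2 v).1
  have hT1 : ∀ j ∈ Icc 1 K, ∀ v, That j v ≤ 1 := fun j hj v =>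
    (hT j (mem_Icc.1 hj).1 (mem_Icc.1 hj).2 v).2
  exact optCost_sub_optCost_le_of_nested P θ f'
    (lowerMap_le_lowerMap_succ hw' hT0 hkK) (lowerMap_le_upperMap hw' (k + 1))
    (upperMap_succ_le_upperMap hw' hT1 hkK) (upperMap_le_one hw' hT1 hkK.le) hne

/-- The convergence bound is monotonically non-increasing in `k`. -/
theorem convergence_bound_monotone_decrease
    {V : Type*} (P : Finset (List V)) (θ : ℝ) (f' : List V → ℝ)
    (K : ℕ) (That : ℕ → V → ℝ) (w : ℕ → ℝ)
    (hw : ∀ j, 1 ≤ j → j ≤ K → 0 < w j)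
    (hT : ∀ j, 1 ≤ j → j ≤ K → ∀ v, 0 ≤ That j v ∧ That j v ≤ 1)
    (k : ℕ) (hk1 : 1 ≤ k) (hkK : k < K)
    (hne : (feasSet P θ (fun v =>
      (∑ j ∈ Finset.Icc 1 k, w j * That j v) / (∑ j ∈ Finset.Icc 1 K, w j))).Nonempty) :
    optCost P θ f' (fun v =>
        (∑ j ∈ Finset.Icc 1 (k+1), w j * That j v) / (∑ j ∈ Finset.Icc 1 K, w j))
      - optCost P θ f' (fun v =>
        (∑ j ∈ Finset.Icc 1 (k+1), w j * That j v + ∑ j ∈ Finset.Icc (k+2) K, w j)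
          / (∑ j ∈ Finset.Icc 1 K, w j))
    ≤ optCost P θ f' (fun v =>
        (∑ j ∈ Finset.Icc 1 k, w j * That j v) / (∑ j ∈ Finset.Icc 1 K, w j))
      - optCost P θ f' (fun v =>
        (∑ j ∈ Finset.Icc 1 k, w j * That j v + ∑ j ∈ Finset.Icc (k+1) K, w j)
          / (∑ j ∈ Finset.Icc 1 K, w j)) :=
  convergence_bound_monotone_decrease_general P θ f' K That w hw hT k hkK hne
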